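/- Let F be an infinite field, n ≥ 2, and I = T_{Z_n}(UT_n(F)^{(-)}) the ideal of Z_n-graded identities of UT_n(F)^{(-)} with its canonical Z_n-grading. Fix variables z_1,…,z_k of nonzero degrees g_1,…,g_k ∈ Z_n with g_1 + ⋯ + g_k ≤ n − 1 (as integers in {1,…,n−1}). If f, g ∈ B_{(g_1,…,g_k)} have the same permutation σ of the indices 2,…,k and V_f ≤_k V_g in the Higman order on finite sequences of k-tuples of nonnegative integers (tuples compared componentwise), then g ∈ ⟨{f} ∪ I⟩, the smallest T_{Z_n}-ideal containing f and I. -/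

import Mathlib

open FreeLieAlgebra

/-- The free `ℤ/n`-graded Lie algebra over `F`: the free Lie algebra on countably many
variables of each homogeneous degree `g : ZMod n`; the variable `(g, i)` is the `i`-th
variable of degree `g`. -/
abbrev FreeGLie (F : Type) [Field F] (n : ℕ) := FreeLieAlgebra F (ZMod n × ℕ)

/-- Homogeneous Lie monomials (bracket words) of degree `g`. -/
inductive HomWord (F : Type) [Field F] (n : ℕ) : ZMod n → FreeGLie F n → Prop
  | of (g : ZMod n) (i : ℕ) : HomWord F n g (FreeLieAlgebra.of F (g, i))
  | bracket {g h : ZMod n} {x y : FreeGLie F n} :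
      HomWord F n g x → HomWord F n h y → HomWord F n (g + h) ⁅x, y⁆

/-- The homogeneous component of degree `g` of the free graded Lie algebra. -/
noncomputable def homComp (F : Type) [Field F] (n : ℕ) (g : ZMod n) : Submodule F (FreeGLie F n) :=
  Submodule.span F {x | HomWord F n g x}

/-- A graded substitution sends each variable of degree `g` to a homogeneous element
of degree `g`; it induces a grading-preserving endomorphism via `FreeLieAlgebra.lift`,
and every grading-preserving endomorphism arises this way. -/
def IsGradedSubst (F : Type) [Field F] (n : ℕ) (s : ZMod n × ℕ → FreeGLie F n) : Prop :=
  ∀ g i, s (g, i) ∈ homComp F n g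

/-- `S` is a `T`-ideal: the carrier of a Lie ideal of the free graded Lie algebra which is
stable under all grading-preserving endomorphisms. -/
structure IsTIdeal (F : Type) [Field F] (n : ℕ) (S : Set (FreeGLie F n)) : Prop where
  isIdeal : ∃ J : LieIdeal F (FreeGLie F n), S = ↑J
  substClosed : ∀ s, IsGradedSubst F n s → ∀ x ∈ S, FreeLieAlgebra.lift F s x ∈ S

/-- The smallest `T`-ideal containing `S`. -/
def TClosure (F : Type) [Field F] (n : ℕ) (S : Set (FreeGLie F n)) : Set (FreeGLie F n) :=
  ⋂₀ {T | IsTIdeal F n T ∧ S ⊆ T}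

/-- The degree-`g` component of the canonical `ZMod n`-grading of `UT_n(F)⁽⁻⁾`:
the span of the matrix units `e_{ij}` with `i ≤ j` and `j - i = g` in `ZMod n`. -/
def Lcomp (F : Type) [Field F] (n : ℕ) (g : ZMod n) : Submodule F (Matrix (Fin n) (Fin n) F) :=
  Submodule.span F {A | ∃ i j : Fin n, i ≤ j ∧ ((j : ℕ) : ZMod n) - ((i : ℕ) : ZMod n) = g ∧
    A = Matrix.single i j 1}

attribute [local instance 100] LieRing.ofAssociativeRing

/-- The set of `ZMod n`-graded identities of `UT_n(F)⁽⁻⁾` (with commutator bracket),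
i.e. the elements of the free graded Lie algebra vanishing under every substitution that
sends each variable of degree `g` into the component `Lcomp F n g`. -/
def gradedId (F : Type) [Field F] (n : ℕ) : Set (FreeGLie F n) :=
  {f | ∀ v : ZMod n × ℕ → Matrix (Fin n) (Fin n) F,
    (∀ g i, v (g, i) ∈ Lcomp F n g) → FreeLieAlgebra.lift F v f = 0}

/-- The left-normed bracket `[x, l₁, l₂, …]`. -/
noncomputable def lnw (F : Type) [Field F] (n : ℕ) (x : FreeGLie F n)
    (l : List (FreeGLie F n)) : FreeGLie F n :=
  l.foldl (fun a b => ⁅a, b⁆) x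

/-- The degree-0 variable `y_i`. -/
noncomputable def yv (F : Type) [Field F] (n : ℕ) (i : ℕ) : FreeGLie F n :=
  FreeLieAlgebra.of F ((0 : ZMod n), i)

/-- The variable `z_j` of nonzero degree `g j` (the `j`-th of the `k+1` fixed variables of
nonzero degree; distinct `j` give distinct variables). -/
noncomputable def zvG (F : Type) [Field F] (n k : ℕ) (g : Fin (k + 1) → ZMod n)
    (j : Fin (k + 1)) : FreeGLie F n :=
  FreeLieAlgebra.of F (g j, j.val)

/-- The block of degree-0 variables `y_off, y_{off+1}, …` with multiplicities given by the
`s`-components of the tuples in the list `p`. -/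
noncomputable def ybT (F : Type) [Field F] (n k : ℕ) (s : Fin (k + 1)) :
    ℕ → List (Fin (k + 1) → ℕ) → List (FreeGLie F n)
  | _, [] => []
  | off, t :: rest => List.replicate (t s) (yv F n off) ++ ybT F n k s (off + 1) rest

/-- The element
`[z₁, a₁⁽¹⁾y₁,…,aₘ⁽¹⁾yₘ, z_{σ(2)}, a₁⁽²⁾y₁,…,aₘ⁽²⁾yₘ, …, z_{σ(k+1)}, a₁⁽ᵏ⁺¹⁾y₁,…,aₘ⁽ᵏ⁺¹⁾yₘ]`
of `B₍g₁,…,g_{k+1}₎`, where the `i`-th entry of the list `p` is the tuple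
`(aᵢ⁽¹⁾, …, aᵢ⁽ᵏ⁺¹⁾)` of exponents of `yᵢ`, so `p` is exactly the sequence `V` attached to
the element. -/
noncomputable def BgEl (F : Type) [Field F] (n k : ℕ) (g : Fin (k + 1) → ZMod n)
    (σ : Equiv.Perm (Fin (k + 1))) (p : List (Fin (k + 1) → ℕ)) : FreeGLie F n :=
  lnw F n (zvG F n k g 0)
    ((List.finRange (k + 1)).flatMap fun s =>
      (if s = 0 then [] else [zvG F n k g (σ s)]) ++ ybT F n k s 0 p)

/-!
Modulo the graded identities the degree-`0` variables commute (they are sent to diagonal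
matrices), so within each segment of a word of `B₍g₁,…,g_k₎` only the multiset of `y`'s
matters. Appending `y_m` to a segment stays in the `T`-ideal: for the last segment the new word
is `[w, y_m]`; otherwise the substitution `z ↦ [z, y_m]` for the variable `z` opening the next
segment produces, by the Jacobi identity, the difference of the word with `y_m` at the front of
the next segment and the word with `y_m` at the end of the current one, and the former lies in
the `T`-ideal by induction on the number of segments to the right. A Higman embedding
`V_f ≤ V_g` is then realised by renaming the `y`'s of `f` along the embedding and inserting the
missing `y`'s.
-/

section LeftNormed

variable {F : Type} [Field F] {n : ℕ}

@[simp]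
theorem lnw_nil (x : FreeGLie F n) : lnw F n x [] = x :=
  rfl

theorem lnw_cons (x a : FreeGLie F n) (l : List (FreeGLie F n)) :
    lnw F n x (a :: l) = lnw F n ⁅x, a⁆ l :=
  rfl

theorem lnw_append (x : FreeGLie F n) (u v : List (FreeGLie F n)) :
    lnw F n x (u ++ v) = lnw F n (lnw F n x u) v :=
  List.foldl_append

theorem lnw_sub (x y : FreeGLie F n) (l : List (FreeGLie F n)) :
    lnw F n (x - y) l = lnw F n x l - lnw F n y l := by
  induction l generalizing x y with
  | nil => rfl
  | cons a l ih => exact (congrArg (lnw F n · l) (sub_lie x y a)).trans (ih _ _)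

theorem LieHom.map_lnw (φ : FreeGLie F n →ₗ⁅F⁆ FreeGLie F n) (x : FreeGLie F n)
    (l : List (FreeGLie F n)) : φ (lnw F n x l) = lnw F n (φ x) (l.map φ) := by
  induction l generalizing x with
  | nil => rfl
  | cons a l ih => exact (ih _).trans (by rw [LieHom.map_lie]; rfl)

theorem lnw_append_lie (x a b : FreeGLie F n) (u v : List (FreeGLie F n)) :
    lnw F n x (u ++ ⁅a, b⁆ :: v) =
      lnw F n x (u ++ a :: b :: v) - lnw F n x (u ++ b :: a :: v) := by
  simp only [lnw_append, lnw_cons]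
  rw [← lnw_sub]
  congr 1
  rw [leibniz_lie, ← lie_skew ⁅lnw F n x u, b⁆ a, sub_neg_eq_add]

theorem lnw_mem {J : LieIdeal F (FreeGLie F n)} {x : FreeGLie F n} (hx : x ∈ J)
    (l : List (FreeGLie F n)) : lnw F n x l ∈ J := by
  induction l generalizing x with
  | nil => exact hx
  | cons a l ih => exact ih (lie_mem_left F _ J x a hx)

theorem lnw_append_cons_mem {J : LieIdeal F (FreeGLie F n)} (x : FreeGLie F n) {c : FreeGLie F n}
    (hc : c ∈ J) (u v : List (FreeGLie F n)) : lnw F n x (u ++ c :: v) ∈ J := by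
  rw [lnw_append]
  exact lnw_mem (lie_mem_right F _ J _ c hc) v

theorem lnw_sub_mem_of_perm (J : LieIdeal F (FreeGLie F n)) (x : FreeGLie F n)
    {l l' : List (FreeGLie F n)} (h : l.Perm l') (hl : ∀ a ∈ l, ∀ b ∈ l, ⁅a, b⁆ ∈ J)
    (u v : List (FreeGLie F n)) :
    lnw F n x (u ++ l ++ v) - lnw F n x (u ++ l' ++ v) ∈ J := by
  induction h generalizing u with
  | nil => simp
  | cons a _ ih =>
    simpa using ih (fun c hc d hd => hl c (by simp [hc]) d (by simp [hd])) (u ++ [a])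
  | swap a b l =>
    simp only [List.append_assoc, List.cons_append]
    rw [← lnw_append_lie]
    exact lnw_append_cons_mem x (hl b (by simp) a (by simp)) u _
  | trans h₁₂ _ ih₁₂ ih₂₃ =>
    have hl₂ : ∀ a ∈ _, ∀ b ∈ _, ⁅a, b⁆ ∈ J := fun a ha b hb =>
      hl a (h₁₂.mem_iff.2 ha) b (h₁₂.mem_iff.2 hb)
    simpa using add_mem (ih₁₂ hl u) (ih₂₃ hl₂ u)

end LeftNormed

section GradedIdentities

variable {F : Type} [Field F] {n : ℕ}

theorem isDiag_of_mem_Lcomp_zero {A : Matrix (Fin n) (Fin n) F} (hA : A ∈ Lcomp F n 0) :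
    A.IsDiag := by
  induction hA using Submodule.span_induction with
  | mem A hA =>
    obtain ⟨i, j, -, hji, rfl⟩ := hA
    have hij : i = j := by
      rw [sub_eq_zero, ZMod.natCast_eq_natCast_iff', Nat.mod_eq_of_lt j.isLt,
        Nat.mod_eq_of_lt i.isLt] at hji
      exact Fin.ext hji.symm
    rw [hij, ← Matrix.diagonal_single]
    exact Matrix.isDiag_diagonal _
  | zero => exact Matrix.isDiag_zero
  | add _ _ _ _ hA hB => exact hA.add hB
  | smul c _ _ hA => exact hA.smul c

theorem lie_yv_mem_gradedId (i j : ℕ) : ⁅yv F n i, yv F n j⁆ ∈ gradedId F n := by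
  intro v hv
  rw [LieHom.map_lie, yv, yv, lift_of_apply, lift_of_apply, Ring.lie_def, sub_eq_zero,
    ← (isDiag_of_mem_Lcomp_zero (hv 0 i)).diagonal_diag,
    ← (isDiag_of_mem_Lcomp_zero (hv 0 j)).diagonal_diag, Matrix.diagonal_mul_diagonal,
    Matrix.diagonal_mul_diagonal]
  simp only [mul_comm]

end GradedIdentities

section Substitutions

variable {F : Type} [Field F] {n : ℕ}

theorem isGradedSubst_of_comp {ψ : ZMod n × ℕ → ZMod n × ℕ} (hψ : ∀ a, (ψ a).1 = a.1) :
    IsGradedSubst F n (of F ∘ ψ) := by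
  intro g i
  have hg := hψ (g, i)
  rw [Function.comp_apply]
  generalize ψ (g, i) = b at hg
  obtain ⟨d, j⟩ := b
  subst hg
  exact Submodule.subset_span (HomWord.of d j)

theorem isGradedSubst_update_of {a : ZMod n × ℕ} {w : FreeGLie F n} (hw : w ∈ homComp F n a.1) :
    IsGradedSubst F n (Function.update (of F) a w) := by
  intro g i
  by_cases h : (g, i) = a
  · subst h
    simpa using hw
  · rw [Function.update_of_ne h]
    exact Submodule.subset_span (HomWord.of g i)

theorem lie_of_yv_mem_homComp (a : ZMod n × ℕ) (m : ℕ) :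
    ⁅of F a, yv F n m⁆ ∈ homComp F n a.1 := by
  have h := HomWord.bracket (HomWord.of (F := F) a.1 a.2) (HomWord.of 0 m)
  rw [add_zero] at h
  exact Submodule.subset_span h

variable (F n) in
noncomputable def lnwVars (x₀ : ZMod n × ℕ) (t : List (ZMod n × ℕ)) : FreeGLie F n :=
  lnw F n (of F x₀) (t.map (of F))

theorem lift_comp_lnwVars (ψ : ZMod n × ℕ → ZMod n × ℕ) (x₀ : ZMod n × ℕ)
    (t : List (ZMod n × ℕ)) :
    lift F (of F ∘ ψ) (lnwVars F n x₀ t) = lnwVars F n (ψ x₀) (t.map ψ) := by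
  simp [lnwVars, LieHom.map_lnw, List.map_map, Function.comp_def]

theorem lift_update_lnwVars {a x₀ : ZMod n × ℕ} {u v : List (ZMod n × ℕ)} (w : FreeGLie F n)
    (hu : a ∉ x₀ :: u) (hv : a ∉ v) :
    lift F (Function.update (of F) a w) (lnwVars F n x₀ (u ++ a :: v)) =
      lnw F n (of F x₀) (u.map (of F) ++ w :: v.map (of F)) := by
  have hfix : ∀ l : List (ZMod n × ℕ), a ∉ l →
      l.map (Function.update (of F) a w) = l.map (of F) := fun l hl =>
    List.map_congr_left fun b hb => Function.update_of_ne (ne_of_mem_of_not_mem hb hl) _ _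
  rw [List.mem_cons, not_or] at hu
  simp [lnwVars, LieHom.map_lnw, Function.comp_def, hfix u hu.2, hfix v hv,
    Function.update_of_ne (Ne.symm hu.1)]

end Substitutions

section Blocks

variable {F : Type} [Field F] {n : ℕ}

-- The block `(z, L)` is the segment `z, y_{L₀}, y_{L₁}, …` of a word, where `y_i` is the
-- variable `(0, i)`.
def blockVars (bs : List ((ZMod n × ℕ) × List ℕ)) : List (ZMod n × ℕ) :=
  bs.flatMap fun b => b.1 :: b.2.map (Prod.mk 0)

theorem mem_blockVars {a : ZMod n × ℕ} {bs : List ((ZMod n × ℕ) × List ℕ)}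
    (ha : a ∈ blockVars bs) : a ∈ bs.map Prod.fst ∨ a.1 = 0 := by
  simp only [blockVars, List.mem_flatMap, List.mem_cons, List.mem_map] at ha
  obtain ⟨b, hb, rfl | ⟨i, -, rfl⟩⟩ := ha
  · exact Or.inl (List.mem_map_of_mem hb)
  · exact Or.inr rfl

def IsFreshBlocks (t : List (ZMod n × ℕ)) (bs : List ((ZMod n × ℕ) × List ℕ)) : Prop :=
  (bs.map Prod.fst).Nodup ∧ ∀ b ∈ bs, b.1.1 ≠ 0 ∧ b.1 ∉ t

namespace IsFreshBlocks

variable {t : List (ZMod n × ℕ)} {z : ZMod n × ℕ} {M : List ℕ} {bs : List ((ZMod n × ℕ) × List ℕ)}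

theorem head_not_mem_left (h : IsFreshBlocks t ((z, M) :: bs)) (L : List ℕ) :
    z ∉ t ++ L.map (Prod.mk 0) := by
  obtain ⟨hdeg, ht⟩ := h.2 (z, M) List.mem_cons_self
  simp only [List.mem_append, List.mem_map, not_or]
  exact ⟨ht, by rintro ⟨i, -, rfl⟩; exact hdeg rfl⟩

theorem head_not_mem_right (h : IsFreshBlocks t ((z, M) :: bs)) :
    z ∉ M.map (Prod.mk 0) ++ blockVars bs := by
  have hdeg := (h.2 (z, M) List.mem_cons_self).1
  have hnd := (List.nodup_cons.1 h.1).1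
  simp only [List.mem_append, List.mem_map, not_or]
  refine ⟨by rintro ⟨i, -, rfl⟩; exact hdeg rfl, fun hz => ?_⟩
  rcases mem_blockVars hz with hz | hz
  · exact hnd hz
  · exact hdeg hz

theorem tail (h : IsFreshBlocks t ((z, M) :: bs)) (L : List ℕ) :
    IsFreshBlocks (t ++ L.map (Prod.mk 0) ++ [z]) bs := by
  refine ⟨(List.nodup_cons.1 h.1).2, fun b hb => ?_⟩
  have hbs := h.2 b (List.mem_cons_of_mem _ hb)
  refine ⟨hbs.1, ?_⟩
  simp only [List.mem_append, List.mem_map, List.mem_singleton, not_or]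
  refine ⟨⟨hbs.2, by rintro ⟨i, -, hi⟩; exact hbs.1 (by rw [← hi])⟩, ?_⟩
  rintro rfl
  exact (List.nodup_cons.1 h.1).1 (List.mem_map.2 ⟨b, hb, rfl⟩)

end IsFreshBlocks

variable {J : LieIdeal F (FreeGLie F n)}

theorem lnwVars_mem_of_perm (hI : gradedId F n ⊆ J) {x₀ : ZMod n × ℕ} {L L' : List ℕ}
    (h : L.Perm L') {pre post : List (ZMod n × ℕ)}
    (hL : lnwVars F n x₀ (pre ++ L.map (Prod.mk 0) ++ post) ∈ J) :
    lnwVars F n x₀ (pre ++ L'.map (Prod.mk 0) ++ post) ∈ J := by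
  have hsub := lnw_sub_mem_of_perm J (of F x₀) ((h.map (Prod.mk 0)).map (of F)) ?_
    (pre.map (of F)) (post.map (of F))
  · simpa [lnwVars] using sub_mem hL hsub
  · simp only [List.map_map, List.mem_map]
    rintro _ ⟨i, -, rfl⟩ _ ⟨j, -, rfl⟩
    exact hI (lie_yv_mem_gradedId i j)

theorem lnwVars_append_mem (hJ : IsTIdeal F n J) (hI : gradedId F n ⊆ J) (x₀ : ZMod n × ℕ)
    (m : ℕ) : ∀ (bs : List ((ZMod n × ℕ) × List ℕ)) (pre : List (ZMod n × ℕ)) (L : List ℕ),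
      IsFreshBlocks (x₀ :: pre) bs →
      lnwVars F n x₀ (pre ++ L.map (Prod.mk 0) ++ blockVars bs) ∈ J →
      lnwVars F n x₀ (pre ++ (L ++ [m]).map (Prod.mk 0) ++ blockVars bs) ∈ J
  | [], pre, L, _, h => by
    simpa [lnwVars, blockVars, lnw_append, lnw_cons, yv] using lie_mem_left F _ J _ (yv F n m) h
  | (z, M) :: bs, pre, L, hfresh, h => by
    have hsplit : pre ++ L.map (Prod.mk 0) ++ blockVars ((z, M) :: bs) =
        (pre ++ L.map (Prod.mk 0)) ++ z :: (M.map (Prod.mk 0) ++ blockVars bs) := by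
      simp [blockVars]
    -- `z ↦ [z, y_m]` sends `h` to the word with `z, y_m` minus the goal word with `y_m, z`.
    have hsubst := hJ.substClosed _ (isGradedSubst_update_of (lie_of_yv_mem_homComp z m)) _ h
    rw [hsplit, lift_update_lnwVars (u := pre ++ L.map (Prod.mk 0)) _
      (hfresh.head_not_mem_left L) hfresh.head_not_mem_right, lnw_append_lie] at hsubst
    have ih := lnwVars_append_mem hJ hI x₀ m bs (pre ++ L.map (Prod.mk 0) ++ [z]) M
      (by simpa using hfresh.tail L) (by simpa [blockVars] using h)
    have ih' := lnwVars_mem_of_perm hI (List.perm_append_singleton m M) ih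
    simpa [lnwVars, blockVars, yv] using sub_mem ih' hsubst

theorem lnwVars_mem_of_subperm (hJ : IsTIdeal F n J) (hI : gradedId F n ⊆ J)
    {x₀ : ZMod n × ℕ} {pre : List (ZMod n × ℕ)} {L L' : List ℕ}
    {bs : List ((ZMod n × ℕ) × List ℕ)} (hLL' : L.Subperm L') (hbs : IsFreshBlocks (x₀ :: pre) bs)
    (h : lnwVars F n x₀ (pre ++ L.map (Prod.mk 0) ++ blockVars bs) ∈ J) :
    lnwVars F n x₀ (pre ++ L'.map (Prod.mk 0) ++ blockVars bs) ∈ J := by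
  have happend : ∀ (E L₀ : List ℕ),
      lnwVars F n x₀ (pre ++ L₀.map (Prod.mk 0) ++ blockVars bs) ∈ J →
      lnwVars F n x₀ (pre ++ (L₀ ++ E).map (Prod.mk 0) ++ blockVars bs) ∈ J := by
    intro E
    induction E with
    | nil => simp
    | cons e E ih =>
      intro L₀ hL₀
      simpa using ih _ (lnwVars_append_mem hJ hI x₀ e bs pre L₀ hbs hL₀)
  obtain ⟨L₀, hL₀, hsub⟩ := hLL'
  obtain ⟨E, hE⟩ := hsub.exists_perm_append
  exact lnwVars_mem_of_perm hI hE.symm (happend E L₀ (lnwVars_mem_of_perm hI hL₀.symm h))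

theorem lnwVars_mem_of_forall₂_subperm (hJ : IsTIdeal F n J) (hI : gradedId F n ⊆ J)
    {x₀ : ZMod n × ℕ} {bs bs' : List ((ZMod n × ℕ) × List ℕ)}
    (hbs : List.Forall₂ (fun b b' => b.1 = b'.1 ∧ b.2.Subperm b'.2) bs bs') :
    ∀ {pre : List (ZMod n × ℕ)} {L L' : List ℕ}, L.Subperm L' → IsFreshBlocks (x₀ :: pre) bs →
      lnwVars F n x₀ (pre ++ L.map (Prod.mk 0) ++ blockVars bs) ∈ J →
      lnwVars F n x₀ (pre ++ L'.map (Prod.mk 0) ++ blockVars bs') ∈ J := by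
  induction hbs with
  | nil => exact lnwVars_mem_of_subperm hJ hI
  | @cons b b' bs bs' hb _ ih =>
    intro pre L L' hLL' hfresh h
    obtain ⟨z, M⟩ := b
    obtain ⟨z', M'⟩ := b'
    obtain ⟨rfl, hMM'⟩ := hb
    have h₁ := lnwVars_mem_of_subperm hJ hI hLL' hfresh h
    have h₂ := ih (pre := pre ++ L'.map (Prod.mk 0) ++ [z]) hMM' (by simpa using hfresh.tail L')
      (by simpa [blockVars] using h₁)
    simpa [blockVars] using h₂

end Blocks

section Renaming

variable {F : Type} [Field F] {n : ℕ}

def renameY (φ : ℕ → ℕ) (a : ZMod n × ℕ) : ZMod n × ℕ :=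
  if a.1 = 0 then (0, φ a.2) else a

theorem renameY_fst (φ : ℕ → ℕ) (a : ZMod n × ℕ) : (renameY φ a).1 = a.1 := by
  unfold renameY
  split_ifs with h
  · exact h.symm
  · rfl

theorem renameY_of_ne {φ : ℕ → ℕ} {a : ZMod n × ℕ} (ha : a.1 ≠ 0) : renameY φ a = a :=
  if_neg ha

theorem map_renameY_mk_zero (φ : ℕ → ℕ) (L : List ℕ) :
    (L.map (Prod.mk (0 : ZMod n))).map (renameY φ) = (L.map φ).map (Prod.mk 0) := by
  simp [renameY]

theorem map_renameY_blockVars (φ : ℕ → ℕ) {bs : List ((ZMod n × ℕ) × List ℕ)}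
    (hbs : ∀ b ∈ bs, b.1.1 ≠ 0) :
    (blockVars bs).map (renameY φ) = blockVars (bs.map fun b => (b.1, b.2.map φ)) := by
  simp only [blockVars, List.map_flatMap, List.flatMap_map, List.map_cons]
  refine List.flatMap_congr fun b hb => ?_
  rw [renameY_of_ne (hbs b hb), map_renameY_mk_zero]

theorem lift_renameY_lnwVars (φ : ℕ → ℕ) {x₀ : ZMod n × ℕ} (hx₀ : x₀.1 ≠ 0) (L : List ℕ)
    {bs : List ((ZMod n × ℕ) × List ℕ)} (hbs : ∀ b ∈ bs, b.1.1 ≠ 0) :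
    lift F (of F ∘ renameY φ) (lnwVars F n x₀ (L.map (Prod.mk 0) ++ blockVars bs)) =
      lnwVars F n x₀
        ((L.map φ).map (Prod.mk 0) ++ blockVars (bs.map fun b => (b.1, b.2.map φ))) := by
  rw [lift_comp_lnwVars, renameY_of_ne hx₀, List.map_append, map_renameY_mk_zero,
    map_renameY_blockVars φ hbs]

end Renaming

-- The indices of the `y`'s in a segment whose exponents of `y_i, y_{i+1}, …` are `a₀, a₁, …`.
def replicateIdx : ℕ → List ℕ → List ℕ
  | _, [] => []
  | i, a :: as => List.replicate a i ++ replicateIdx (i + 1) as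

theorem le_of_mem_replicateIdx {i j : ℕ} {l : List ℕ} (h : j ∈ replicateIdx i l) : i ≤ j := by
  induction l generalizing i with
  | nil => simp [replicateIdx] at h
  | cons a l ih =>
    simp only [replicateIdx, List.mem_append, List.mem_replicate] at h
    rcases h with ⟨-, rfl⟩ | h
    · exact le_rfl
    · exact (Nat.le_succ i).trans (ih h)

theorem List.SublistForall₂.exists_map_subperm_replicateIdx {ι : Type*} {p q : List (ι → ℕ)}
    (h : List.SublistForall₂ (· ≤ ·) p q) (i j : ℕ) :
    ∃ φ : ℕ → ℕ, ∀ s,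
      ((replicateIdx i (p.map (· s))).map φ).Subperm (replicateIdx j (q.map (· s))) := by
  induction h generalizing i j with
  | nil => exact ⟨id, fun s => by simp [replicateIdx]⟩
  | @cons a b p q hab _ ih =>
    obtain ⟨φ, hφ⟩ := ih (i + 1) (j + 1)
    refine ⟨fun x => if x = i then j else φ x, fun s => ?_⟩
    have hrest : (replicateIdx (i + 1) (p.map (· s))).map (fun x => if x = i then j else φ x) =
        (replicateIdx (i + 1) (p.map (· s))).map φ :=
      List.map_congr_left fun x hx => if_neg (by have := le_of_mem_replicateIdx hx; omega)
    simp only [List.map_cons, replicateIdx, List.map_append, List.map_replicate, if_pos, hrest]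
    exact ((List.replicate_sublist_replicate j).2 (hab s)).subperm.append (hφ s)
  | cons_right _ ih =>
    obtain ⟨φ, hφ⟩ := ih i (j + 1)
    exact ⟨φ, fun s => (hφ s).trans (List.sublist_append_right _ _).subperm⟩

section Segments

variable {F : Type} [Field F] {n k : ℕ}

theorem ybT_eq (s : Fin (k + 1)) (p : List (Fin (k + 1) → ℕ)) (i : ℕ) :
    ybT F n k s i p = ((replicateIdx i (p.map (· s))).map (Prod.mk 0)).map (of F) := by
  induction p generalizing i with
  | nil => rfl
  | cons a p ih => simp [ybT, replicateIdx, ih, yv]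

-- The segments of `BgEl` opened by `z_{σ(2)}, …, z_{σ(k+1)}`, with `y`-indices `M 1, …, M k`.
def zBlocks (g : Fin (k + 1) → ZMod n) (σ : Equiv.Perm (Fin (k + 1)))
    (M : Fin (k + 1) → List ℕ) : List ((ZMod n × ℕ) × List ℕ) :=
  (List.finRange k).map fun j => ((g (σ j.succ), (σ j.succ : ℕ)), M j.succ)

theorem BgEl_eq_lnwVars (g : Fin (k + 1) → ZMod n) (σ : Equiv.Perm (Fin (k + 1)))
    (p : List (Fin (k + 1) → ℕ)) :
    BgEl F n k g σ p = lnwVars F n (g 0, 0) ((replicateIdx 0 (p.map (· 0))).map (Prod.mk 0) ++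
      blockVars (zBlocks g σ fun s => replicateIdx 0 (p.map (· s)))) := by
  simp [BgEl, lnwVars, zBlocks, blockVars, List.finRange_succ, ybT_eq, zvG, Fin.succ_ne_zero,
    List.flatMap_map, List.map_flatMap]

theorem isFreshBlocks_zBlocks {g : Fin (k + 1) → ZMod n} (hg : ∀ j, g j ≠ 0)
    {σ : Equiv.Perm (Fin (k + 1))} (hσ : σ 0 = 0) (M : Fin (k + 1) → List ℕ) :
    IsFreshBlocks [(g 0, 0)] (zBlocks g σ M) := by
  have hne : ∀ j : Fin k, (σ j.succ : ℕ) ≠ 0 := fun j h =>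
    Fin.succ_ne_zero j (σ.injective ((Fin.ext h).trans hσ.symm))
  refine ⟨?_, ?_⟩
  · rw [zBlocks, List.map_map]
    refine (List.nodup_finRange k).map fun i j hij => ?_
    rw [Function.comp_apply, Function.comp_apply, Prod.mk.injEq] at hij
    exact Fin.succ_injective _ (σ.injective (Fin.ext hij.2))
  · simp only [zBlocks, List.mem_map, List.mem_finRange, true_and, List.mem_singleton,
      forall_exists_index, forall_apply_eq_imp_iff, Prod.mk.injEq, not_and]
    exact fun j => ⟨hg _, fun _ h => hne j h⟩

theorem map_zBlocks (g : Fin (k + 1) → ZMod n) (σ : Equiv.Perm (Fin (k + 1))) (φ : ℕ → ℕ)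
    (M : Fin (k + 1) → List ℕ) :
    (zBlocks g σ M).map (fun b => (b.1, b.2.map φ)) = zBlocks g σ fun s => (M s).map φ := by
  simp [zBlocks]

theorem forall₂_zBlocks (g : Fin (k + 1) → ZMod n) (σ : Equiv.Perm (Fin (k + 1)))
    {M M' : Fin (k + 1) → List ℕ} (h : ∀ s, (M s).Subperm (M' s)) :
    List.Forall₂ (fun b b' => b.1 = b'.1 ∧ b.2.Subperm b'.2) (zBlocks g σ M) (zBlocks g σ M') := by
  simp [zBlocks, List.forall₂_map_left_iff, List.forall₂_map_right_iff, h]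

end Segments

theorem stmt14_general (F : Type) [Field F] (n k : ℕ)
    (g : Fin (k + 1) → ZMod n) (hg : ∀ j, g j ≠ 0)
    (σ : Equiv.Perm (Fin (k + 1))) (hσ : σ 0 = 0)
    (p q : List (Fin (k + 1) → ℕ)) (hpq : List.SublistForall₂ (· ≤ ·) p q) :
    BgEl F n k g σ q ∈ TClosure F n ({BgEl F n k g σ p} ∪ gradedId F n) := by
  refine Set.mem_sInter.2 fun T ⟨hT, hST⟩ => ?_
  obtain ⟨J, rfl⟩ := hT.isIdeal
  have hI : gradedId F n ⊆ J := fun x hx => hST (Or.inr hx)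
  obtain ⟨φ, hφ⟩ := hpq.exists_map_subperm_replicateIdx 0 0
  have hfresh := isFreshBlocks_zBlocks hg hσ
  have hp := hT.substClosed _ (isGradedSubst_of_comp (renameY_fst φ)) _ (hST (Or.inl rfl))
  rw [BgEl_eq_lnwVars, lift_renameY_lnwVars φ (hg 0) _ fun b hb => ((hfresh _).2 b hb).1,
    map_zBlocks] at hp
  rw [BgEl_eq_lnwVars]
  simpa using lnwVars_mem_of_forall₂_subperm hT hI (forall₂_zBlocks g σ hφ) (pre := []) (hφ 0)
    (by simpa using hfresh _) (by simpa using hp)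

/-- Fix variables `z₁,…,z_{k+1}` of nonzero degrees `g₁,…,g_{k+1}` with
`g₁ + ⋯ + g_{k+1} ≤ n - 1` (as integers in `{1,…,n-1}`). If `f, g ∈ B₍g₁,…,g_{k+1}₎` have
the same permutation `σ` (with `σ(1) = 1`) and `V_f ≤_k V_g` in the Higman order on finite
sequences of tuples of nonnegative integers (tuples compared componentwise), then `g` lies
in the smallest `T`-ideal containing `f` and the ideal `I` of `ZMod n`-graded identities of
`UT_n(F)⁽⁻⁾`. -/
theorem stmt14 (F : Type) [Field F] [Infinite F] (n k : ℕ) (hn : 2 ≤ n)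
    (g : Fin (k + 1) → ZMod n) (hg : ∀ j, g j ≠ 0) (hsum : ∑ j, (g j).val ≤ n - 1)
    (σ : Equiv.Perm (Fin (k + 1))) (hσ : σ 0 = 0)
    (p q : List (Fin (k + 1) → ℕ)) (hpq : List.SublistForall₂ (· ≤ ·) p q) :
    BgEl F n k g σ q ∈ TClosure F n ({BgEl F n k g σ p} ∪ gradedId F n) :=
  stmt14_general F n k g hg σ hσ p q hpq
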